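/- Suppose all vote shares p_d are distinct, and fix an allocation x ⊆ Fin N with |x| = Ŝ. Then x is Pareto efficient — meaning there is no allocation x' ⊆ Fin N with Dist(x') ≤ Dist(x) and Agg(x') ≤ Agg(x), at least one inequality strict — if and only if there exists a weight w > 0 such that Ŝ minimizes Φ_p(·; w) over {0,…,N} and x is a top-Ŝ allocation (that is, p_j < p_i for every i ∈ x and j ∉ x). -/

import Mathlib

/-!
Since `Dist(x) = |x| + a − 2 ∑_{d ∈ x} p_d` and `Agg(x)` depends on `|x|` only, an efficient
allocation must be top (with distinct shares a swap would otherwise lower `Dist`), and then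
`Φ(x; w) = Φ_p(|x|; w)`, while `Φ(y; w) ≥ Φ_p(|y|; w)` for every `y`; this gives the converse
direction at once. For `w ≥ 0` the increments of `Φ_p(·; w)` are nondecreasing, so a local
minimum is global. The weights `w > 0` at which `Ŝ` beats `Ŝ − 1`, resp. `Ŝ + 1`, form closed
sets which are nonempty because `Ŝ` is not dominated, and by convexity they cover `(0, ∞)`;
connectedness of `(0, ∞)` yields a common weight.
-/

open Finset

/-- Sum of the `S` largest entries of the vote-share profile `p`. -/
noncomputable def topSum {N : ℕ} (p : Fin N → ℝ) (S : ℕ) : ℝ :=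
  ∑ i : Fin N, if (i : ℕ) < S then p (Tuple.sort p i.rev) else 0

/-- `ordStat p i` is the `(i+1)`-th largest entry of `p` (so `ordStat p ⟨S-1,_⟩` is `p_(S)`). -/
noncomputable def ordStat {N : ℕ} (p : Fin N → ℝ) (i : Fin N) : ℝ :=
  p (Tuple.sort p i.rev)

/-- Total misrepresentation `Φ_p(S; w) = S + a − 2·Γ_p(S) + w·|a − S|` of a top-`S`
allocation at weight `w`, where `a = ∑ d, p d`. -/
noncomputable def PhiS {N : ℕ} (p : Fin N → ℝ) (S : ℕ) (w : ℝ) : ℝ :=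
  (S : ℝ) + (∑ d, p d) - 2 * topSum p S + w * |(∑ d, p d) - (S : ℝ)|
/-- District-level misrepresentation `Dist(x) = ∑_{d ∈ x} (1 − p_d) + ∑_{d ∉ x} p_d`. -/
noncomputable def distM {N : ℕ} (p : Fin N → ℝ) (x : Finset (Fin N)) : ℝ :=
  ∑ d ∈ x, (1 - p d) + ∑ d ∈ xᶜ, p d

/-- Statewide misrepresentation `Agg(x) = |a − |x||` where `a = ∑ d, p d`. -/
noncomputable def aggM {N : ℕ} (p : Fin N → ℝ) (x : Finset (Fin N)) : ℝ :=
  |(∑ d, p d) - (x.card : ℝ)|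

/-- Total misrepresentation `Φ(x; w) = Dist(x) + w·Agg(x)` of allocation `x`. -/
noncomputable def PhiA {N : ℕ} (p : Fin N → ℝ) (x : Finset (Fin N)) (w : ℝ) : ℝ :=
  distM p x + w * aggM p x

section Exchange

variable {α M : Type*} [DecidableEq α] [AddCommMonoid M] [LinearOrder M] [IsOrderedAddMonoid M]

theorem sum_sdiff_le_sum_sdiff {f : α → M} {x y : Finset α}
    (hx : ∀ i ∈ x, ∀ j ∉ x, f j ≤ f i) (hcard : #y = #x) :
    ∑ j ∈ y \ x, f j ≤ ∑ i ∈ x \ y, f i := by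
  rcases (x \ y).eq_empty_or_nonempty with hxy | hxy
  · have hyx : y \ x = ∅ := card_eq_zero.1 (by rw [card_sdiff_comm hcard, hxy, card_empty])
    simp [hxy, hyx]
  · obtain ⟨i₀, hi₀, hmin⟩ := (x \ y).exists_min_image f hxy
    calc ∑ j ∈ y \ x, f j ≤ #(y \ x) • f i₀ :=
          sum_le_card_nsmul _ _ _ fun j hj => hx i₀ (mem_sdiff.1 hi₀).1 j (mem_sdiff.1 hj).2
      _ = #(x \ y) • f i₀ := by rw [card_sdiff_comm hcard]
      _ ≤ ∑ i ∈ x \ y, f i := card_nsmul_le_sum _ _ _ hmin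

theorem sum_le_sum_of_forall_notMem_le {f : α → M} {x y : Finset α}
    (hx : ∀ i ∈ x, ∀ j ∉ x, f j ≤ f i) (hcard : #y = #x) :
    ∑ j ∈ y, f j ≤ ∑ i ∈ x, f i := by
  rw [← sum_sdiff (inter_subset_left (s₁ := y) (s₂ := x)),
    ← sum_sdiff (inter_subset_left (s₁ := x) (s₂ := y)), sdiff_inter_self_left,
    sdiff_inter_self_left, inter_comm]
  exact add_le_add (sum_sdiff_le_sum_sdiff hx hcard) le_rfl

end Exchange

theorem exists_pos_add_mul_le_of_not_dominates {d a d' a' : ℝ}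
    (h : ¬(d' ≤ d ∧ a' ≤ a ∧ (d' < d ∨ a' < a))) : ∃ w > 0, d + w * a ≤ d' + w * a' := by
  rcases lt_trichotomy a a' with ha | rfl | ha
  · refine ⟨(|d - d'| + 1) / (a' - a), by positivity, ?_⟩
    have : (|d - d'| + 1) / (a' - a) * (a' - a) = |d - d'| + 1 :=
      div_mul_cancel₀ _ (sub_pos.2 ha).ne'
    nlinarith [le_abs_self (d - d')]
  · exact ⟨1, one_pos, by
      have : d ≤ d' := not_lt.1 fun hd => h ⟨hd.le, le_rfl, Or.inl hd⟩
      linarith⟩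
  · have hd : d < d' := not_le.1 fun hd => h ⟨hd, ha.le, Or.inr ha⟩
    refine ⟨(d' - d) / (a - a'), div_pos (sub_pos.2 hd) (sub_pos.2 ha), ?_⟩
    have : (d' - d) / (a - a') * (a - a') = d' - d := div_mul_cancel₀ _ (sub_pos.2 ha).ne'
    nlinarith

theorem add_mul_lt_of_dominates {d a d' a' w : ℝ}
    (h : d' ≤ d ∧ a' ≤ a ∧ (d' < d ∨ a' < a)) (hw : 0 < w) : d' + w * a' < d + w * a := by
  obtain ⟨hd, ha, hd' | ha'⟩ := h
  · nlinarith
  · nlinarith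

theorem le_of_le_neighbours_of_monotoneOn_sub {f : ℕ → ℝ} {n N : ℕ}
    (hf : MonotoneOn (fun k => f (k + 1) - f k) (Set.Iio N)) (hn : n ≤ N)
    (hup : n < N → f n ≤ f (n + 1)) (hdn : 0 < n → f n ≤ f (n - 1)) {m : ℕ} (hm : m ≤ N) :
    f n ≤ f m := by
  rcases le_total n m with hnm | hmn
  · induction m, hnm using Nat.le_induction with
    | base => exact le_rfl
    | succ k hnk ih =>
      have hkN : k < N := by omega
      have := hf (show n ∈ Set.Iio N by simp; omega) (show k ∈ Set.Iio N from hkN) hnk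
      linarith [ih hkN.le, hup (by omega)]
  · induction hmn using Nat.decreasingInduction with
    | self => exact le_rfl
    | of_succ k hkn ih =>
      have hn1 : n - 1 + 1 = n := by omega
      have := hf (show k ∈ Set.Iio N by simp; omega) (show n - 1 ∈ Set.Iio N by simp; omega)
        (by omega : k ≤ n - 1)
      simp only [hn1] at this
      linarith [ih (by omega), hdn (by omega)]

theorem exists_pos_forall_le {F : ℝ → ℕ → ℝ} {n N : ℕ} (hcont : ∀ k, Continuous fun w => F w k)
    (hconv : ∀ w > 0, MonotoneOn (fun k => F w (k + 1) - F w k) (Set.Iio N)) (hn : n ≤ N)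
    (hweight : ∀ m ≤ N, ∃ w > 0, F w n ≤ F w m) : ∃ w > 0, ∀ m ≤ N, F w n ≤ F w m := by
  set down := {w | 0 < n → F w n ≤ F w (n - 1)}
  set up := {w | n < N → F w n ≤ F w (n + 1)}
  have hclosed : ∀ (P : Prop) (k : ℕ), IsClosed {w | P → F w n ≤ F w k} := fun P k => by
    rw [Set.ofPred_forall]
    exact isClosed_iInter fun _ => isClosed_le (hcont n) (hcont k)
  -- a step down that increases `F w` forces, by convexity, a step up that increases it too
  have hcover : Set.Ioi 0 ⊆ down ∪ up := by
    intro w hw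
    by_cases hdn : w ∈ down
    · exact Or.inl hdn
    refine Or.inr fun hnN => ?_
    simp only [down, Set.mem_ofPred_eq, Classical.not_imp, not_le] at hdn
    have hn1 : n - 1 + 1 = n := by omega
    have := hconv w hw (show n - 1 ∈ Set.Iio N by simp; omega) (show n ∈ Set.Iio N from hnN)
      (by omega : n - 1 ≤ n)
    simp only [hn1] at this
    linarith [hdn.2]
  have hdown : (Set.Ioi 0 ∩ down).Nonempty := by
    obtain ⟨w, hw, h⟩ := hweight (n - 1) (by omega)
    exact ⟨w, hw, fun _ => h⟩
  have hup : (Set.Ioi 0 ∩ up).Nonempty := by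
    rcases lt_or_ge n N with hnN | hnN
    · obtain ⟨w, hw, h⟩ := hweight (n + 1) hnN
      exact ⟨w, hw, fun _ => h⟩
    · exact ⟨1, Set.mem_Ioi.2 one_pos, fun h => absurd h hnN.not_gt⟩
  obtain ⟨w, hw, hwdn, hwup⟩ := isPreconnected_closed_iff.1 isPreconnected_Ioi down up
    (hclosed _ _) (hclosed _ _) hcover hdown hup
  exact ⟨w, hw, fun m hm => le_of_le_neighbours_of_monotoneOn_sub (hconv w hw) hn hwup hwdn hm⟩

theorem abs_sub_add_one_sub_abs_sub_monotone (a : ℝ) :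
    Monotone fun t : ℝ => |a - (t + 1)| - |a - t| := by
  intro s t hst
  simp only
  rcases abs_cases (a - (s + 1)) with h₁ | h₁ <;> rcases abs_cases (a - s) with h₂ | h₂ <;>
    rcases abs_cases (a - (t + 1)) with h₃ | h₃ <;> rcases abs_cases (a - t) with h₄ | h₄ <;>
    linarith

section Sorted

variable {N : ℕ}

/-- `descRank p i` is the position of `i` when the districts are listed by decreasing `p`. -/
noncomputable def descRank (p : Fin N → ℝ) : Equiv.Perm (Fin N) :=
  (Tuple.sort p).symm.trans Fin.revPerm

theorem ordStat_descRank (p : Fin N → ℝ) (i : Fin N) : ordStat p (descRank p i) = p i := by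
  simp [ordStat, descRank]

theorem ordStat_antitone (p : Fin N → ℝ) : Antitone (ordStat p) :=
  (Tuple.monotone_sort p).comp_antitone Fin.rev_anti

noncomputable def topSet (p : Fin N → ℝ) (S : ℕ) : Finset (Fin N) :=
  ({k : Fin N | (k : ℕ) < S} : Finset (Fin N)).map (descRank p).symm.toEmbedding

theorem mem_topSet {p : Fin N → ℝ} {S : ℕ} {i : Fin N} :
    i ∈ topSet p S ↔ (descRank p i : ℕ) < S := by
  simp [topSet]

theorem card_topSet (p : Fin N → ℝ) {S : ℕ} (hS : S ≤ N) : #(topSet p S) = S := by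
  rw [topSet, card_map, Fin.card_filter_val_lt, min_eq_right hS]

theorem topSum_eq_sum_filter (p : Fin N → ℝ) (S : ℕ) :
    topSum p S = ∑ k ∈ ({k : Fin N | (k : ℕ) < S} : Finset (Fin N)), ordStat p k := by
  rw [sum_filter]
  rfl

theorem sum_topSet (p : Fin N → ℝ) (S : ℕ) : ∑ i ∈ topSet p S, p i = topSum p S := by
  rw [topSet, sum_map, topSum_eq_sum_filter]
  rfl

theorem le_of_mem_topSet (p : Fin N → ℝ) (S : ℕ) :
    ∀ i ∈ topSet p S, ∀ j ∉ topSet p S, p j ≤ p i := by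
  intro i hi j hj
  rw [mem_topSet] at hi hj
  rw [← ordStat_descRank p i, ← ordStat_descRank p j]
  exact ordStat_antitone p (Fin.le_def.2 (by omega))

theorem topSum_succ (p : Fin N → ℝ) {S : ℕ} (hS : S < N) :
    topSum p (S + 1) = topSum p S + ordStat p ⟨S, hS⟩ := by
  have hins : (univ.filter fun k : Fin N => (k : ℕ) < S + 1)
      = insert ⟨S, hS⟩ (univ.filter fun k : Fin N => (k : ℕ) < S) := by
    ext k
    simp only [Order.lt_add_one_iff, mem_filter, mem_univ, true_and, mem_insert, Fin.ext_iff]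
    omega
  rw [topSum_eq_sum_filter, topSum_eq_sum_filter, hins, sum_insert (by simp), add_comm]

theorem sum_le_topSum (p : Fin N → ℝ) (y : Finset (Fin N)) : ∑ i ∈ y, p i ≤ topSum p #y := by
  rw [← sum_topSet]
  exact sum_le_sum_of_forall_notMem_le (le_of_mem_topSet p _)
    (card_topSet p (card_finset_fin_le y)).symm

theorem sum_eq_topSum {p : Fin N → ℝ} {x : Finset (Fin N)}
    (hx : ∀ i ∈ x, ∀ j ∉ x, p j ≤ p i) : ∑ i ∈ x, p i = topSum p #x :=
  (sum_le_topSum p x).antisymm <| by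
    rw [← sum_topSet]
    exact sum_le_sum_of_forall_notMem_le hx (card_topSet p (card_finset_fin_le x))

end Sorted

section Misrepresentation

variable {N : ℕ}

theorem distM_eq (p : Fin N → ℝ) (y : Finset (Fin N)) :
    distM p y = #y + ∑ d, p d - 2 * ∑ d ∈ y, p d := by
  rw [distM, sum_sub_distrib, sum_const, nsmul_one, ← sum_add_sum_compl y p]
  ring

theorem PhiA_eq (p : Fin N → ℝ) (y : Finset (Fin N)) (w : ℝ) :
    PhiA p y w = PhiS p #y w + 2 * (topSum p #y - ∑ d ∈ y, p d) := by
  rw [PhiA, PhiS, distM_eq, aggM]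
  ring

theorem PhiS_card_le_PhiA (p : Fin N → ℝ) (y : Finset (Fin N)) (w : ℝ) :
    PhiS p #y w ≤ PhiA p y w := by
  linarith [PhiA_eq p y w, sum_le_topSum p y]

theorem PhiA_eq_PhiS {p : Fin N → ℝ} {x : Finset (Fin N)}
    (hx : ∀ i ∈ x, ∀ j ∉ x, p j ≤ p i) (w : ℝ) : PhiA p x w = PhiS p #x w := by
  rw [PhiA_eq, sum_eq_topSum hx, sub_self, mul_zero, add_zero]

theorem PhiA_topSet (p : Fin N → ℝ) {S : ℕ} (hS : S ≤ N) (w : ℝ) :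
    PhiA p (topSet p S) w = PhiS p S w := by
  rw [PhiA_eq_PhiS (le_of_mem_topSet p S), card_topSet p hS]

theorem distM_swap (p : Fin N → ℝ) {x : Finset (Fin N)} {i j : Fin N} (hi : i ∈ x) (hj : j ∉ x) :
    #(insert j (x.erase i)) = #x ∧
      distM p (insert j (x.erase i)) = distM p x - 2 * (p j - p i) := by
  have hj' : j ∉ x.erase i := fun h => hj (mem_of_mem_erase h)
  have hcard : #(insert j (x.erase i)) = #x := by
    rw [card_insert_of_notMem hj', card_erase_add_one hi]
  refine ⟨hcard, ?_⟩
  rw [distM_eq, distM_eq, hcard, sum_insert hj', sum_erase_eq_sub hi]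
  ring

def Dominates (p : Fin N → ℝ) (y x : Finset (Fin N)) : Prop :=
  distM p y ≤ distM p x ∧ aggM p y ≤ aggM p x ∧ (distM p y < distM p x ∨ aggM p y < aggM p x)

theorem lt_of_forall_not_dominates {p : Fin N → ℝ} (hinj : Function.Injective p)
    {x : Finset (Fin N)} (hx : ¬∃ y, Dominates p y x) : ∀ i ∈ x, ∀ j ∉ x, p j < p i := by
  intro i hi j hj
  by_contra hle
  have hlt : p i < p j := (not_lt.1 hle).lt_of_ne fun h => hj (hinj h ▸ hi)
  obtain ⟨hcard, hdist⟩ := distM_swap p hi hj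
  refine hx ⟨insert j (x.erase i), ?_, ?_, Or.inl ?_⟩
  · linarith
  · rw [aggM, aggM, hcard]
  · linarith

end Misrepresentation

section Convexity

variable {N : ℕ}

theorem continuous_PhiS (p : Fin N → ℝ) (S : ℕ) : Continuous fun w => PhiS p S w := by
  unfold PhiS
  fun_prop

theorem PhiS_succ_sub (p : Fin N → ℝ) {k : ℕ} (hk : k < N) (w : ℝ) :
    PhiS p (k + 1) w - PhiS p k w
      = 1 - 2 * ordStat p ⟨k, hk⟩ + w * (|∑ d, p d - (k + 1)| - |∑ d, p d - k|) := by
  rw [PhiS, PhiS, topSum_succ p hk]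
  push_cast
  ring

theorem monotoneOn_PhiS_succ_sub (p : Fin N → ℝ) {w : ℝ} (hw : 0 ≤ w) :
    MonotoneOn (fun k => PhiS p (k + 1) w - PhiS p k w) (Set.Iio N) := by
  intro k hk m hm hkm
  simp only [PhiS_succ_sub p hk, PhiS_succ_sub p hm]
  have hord := ordStat_antitone p (Fin.mk_le_mk.2 hkm : (⟨k, hk⟩ : Fin N) ≤ ⟨m, hm⟩)
  have habs := abs_sub_add_one_sub_abs_sub_monotone (∑ d, p d) (Nat.cast_le.2 hkm : (k : ℝ) ≤ m)
  linarith [mul_le_mul_of_nonneg_left habs hw]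

end Convexity

theorem stmt10_general (N : ℕ) (p : Fin N → ℝ)
    (hinj : Function.Injective p)
    (x : Finset (Fin N)) (Shat : ℕ) (hx : x.card = Shat) :
    (¬ ∃ x' : Finset (Fin N), distM p x' ≤ distM p x ∧ aggM p x' ≤ aggM p x ∧
        (distM p x' < distM p x ∨ aggM p x' < aggM p x)) ↔
      (∃ w : ℝ, 0 < w ∧ (∀ S' ≤ N, PhiS p Shat w ≤ PhiS p S' w) ∧
        ∀ i ∈ x, ∀ j ∉ x, p j < p i) := by
  subst hx
  constructor
  · intro hP
    have htop := lt_of_forall_not_dominates hinj hP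
    have hweight : ∀ S ≤ N, ∃ w > 0, PhiS p #x w ≤ PhiS p S w := fun S hS => by
      obtain ⟨w, hw, h⟩ := exists_pos_add_mul_le_of_not_dominates fun h => hP ⟨topSet p S, h⟩
      refine ⟨w, hw, ?_⟩
      rwa [← PhiA_topSet p hS, ← PhiA_eq_PhiS fun i hi j hj => (htop i hi j hj).le]
    obtain ⟨w, hw, hmin⟩ := exists_pos_forall_le (continuous_PhiS p)
      (fun w hw => monotoneOn_PhiS_succ_sub p hw.le) (card_finset_fin_le x) hweight
    exact ⟨w, hw, hmin, htop⟩
  · rintro ⟨w, hw, hmin, htop⟩ ⟨y, hy⟩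
    have hlt : PhiA p y w < PhiA p x w := add_mul_lt_of_dominates hy hw
    linarith [PhiA_eq_PhiS (fun i hi j hj => (htop i hi j hj).le) w, PhiS_card_le_PhiA p y w,
      hmin #y (card_finset_fin_le y)]

/-- Proposition 1: Pareto frontier and scalarization.
Suppose all vote shares are distinct, and fix an allocation `x` with `|x| = Ŝ`. Then `x`
is Pareto efficient — no allocation `x'` has `Dist(x') ≤ Dist(x)` and `Agg(x') ≤ Agg(x)`
with at least one inequality strict — if and only if there exists a weight `w > 0` such
that `Ŝ` minimizes `Φ_p(·; w)` over `{0,…,N}` and `x` is a top-`Ŝ` allocation. -/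
theorem stmt10 (N : ℕ) (hN : 3 ≤ N) (p : Fin N → ℝ)
    (hp : ∀ d, 0 ≤ p d ∧ p d ≤ 1) (hinj : Function.Injective p)
    (x : Finset (Fin N)) (Shat : ℕ) (hx : x.card = Shat) :
    (¬ ∃ x' : Finset (Fin N), distM p x' ≤ distM p x ∧ aggM p x' ≤ aggM p x ∧
        (distM p x' < distM p x ∨ aggM p x' < aggM p x)) ↔
      (∃ w : ℝ, 0 < w ∧ (∀ S' ≤ N, PhiS p Shat w ≤ PhiS p S' w) ∧
        ∀ i ∈ x, ∀ j ∉ x, p j < p i) :=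
  stmt10_general N p hinj x Shat hx
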